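/- For every i in {0,...,m-1} and every w in B_i, it holds that A_i ⊆ N(w) ⊆ A[i-2,i+2]. -/

import Mathlib

open SimpleGraph

/-- `c` is a hole (induced cycle on at least 5 vertices) in `G`:
the images of consecutive indices are adjacent, and these are the only adjacencies. -/
def IsHoleEmb {V : Type*} (G : SimpleGraph V) (n : ℕ) (c : ZMod n → V) : Prop :=
  5 ≤ n ∧ Function.Injective c ∧
    ∀ i j : ZMod n, G.Adj (c i) (c j) ↔ (j = i + 1 ∨ i = j + 1)

/-- The triangle `K₃`. -/
def graphK3 : SimpleGraph (Fin 3) := ⊤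

/-- `T₂`: the star `K_{1,3}` with every edge subdivided once. -/
def graphT2 : SimpleGraph (Fin 7) :=
  SimpleGraph.fromRel (fun i j =>
    (i, j) ∈ [((0 : Fin 7), (1 : Fin 7)), (0, 2), (0, 3), (1, 4), (2, 5), (3, 6)])

/-- `X₂`: a 4-cycle `0 1 2 3` with pendant vertices `4, 5, 6` attached at `0, 1, 2`. -/
def graphX2 : SimpleGraph (Fin 7) :=
  SimpleGraph.fromRel (fun i j =>
    (i, j) ∈ [((0 : Fin 7), (1 : Fin 7)), (1, 2), (2, 3), (3, 0), (0, 4), (1, 5), (2, 6)])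

/-- `X₃`: a path `0 1 2 3 4`, a vertex `5` adjacent to `0, 2, 4`, and a pendant `6` at `5`. -/
def graphX3 : SimpleGraph (Fin 7) :=
  SimpleGraph.fromRel (fun i j =>
    (i, j) ∈ [((0 : Fin 7), (1 : Fin 7)), (1, 2), (2, 3), (3, 4), (5, 0), (5, 2), (5, 4), (5, 6)])

/-- The cycle `C_n` on `ZMod n`. -/
def cycleG (n : ℕ) : SimpleGraph (ZMod n) :=
  SimpleGraph.fromRel (fun i j => j = i + 1)

/-- `G` contains an induced copy of `H`. -/
def ContainsInduced {W V : Type*} (H : SimpleGraph W) (G : SimpleGraph V) : Prop :=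
  Nonempty (H ↪g G)

/-- An almost bipartite permutation graph: no induced `K₃`, `T₂`, `X₂`, `X₃`,
nor `C_k` for `k ∈ {5,…,9}`. -/
def AlmostBPG {V : Type*} (G : SimpleGraph V) : Prop :=
  ¬ ContainsInduced graphK3 G ∧ ¬ ContainsInduced graphT2 G ∧
    ¬ ContainsInduced graphX2 G ∧ ¬ ContainsInduced graphX3 G ∧
    ∀ k : ℕ, 5 ≤ k → k ≤ 9 → ¬ ContainsInduced (cycleG k) G

/-- `c` is a shortest hole in `G`. -/
def ShortestHole {V : Type*} (G : SimpleGraph V) (m : ℕ) (c : ZMod m → V) : Prop :=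
  IsHoleEmb G m c ∧ ∀ (n : ℕ) (c' : ZMod n → V), IsHoleEmb G n c' → m ≤ n

/-- `A_i = {v : N(v) ∩ C = {c_{i-1}, c_{i+1}}}`. -/
def Ai {V : Type*} (G : SimpleGraph V) (m : ℕ) (c : ZMod m → V) (i : ZMod m) : Set V :=
  {v | G.neighborSet v ∩ Set.range c = {c (i - 1), c (i + 1)}}

/-- `B_i = {v : N(v) ∩ C = {c_i}}`. -/
def Bi {V : Type*} (G : SimpleGraph V) (m : ℕ) (c : ZMod m → V) (i : ZMod m) : Set V :=
  {v | G.neighborSet v ∩ Set.range c = {c i}}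

/-- `A[i,j] = A_i ∪ B_{i+1} ∪ A_{i+2} ∪ …` for integers `i ≤ j`. -/
def Ablk {V : Type*} (G : SimpleGraph V) (m : ℕ) (c : ZMod m → V) (i j : ℤ) : Set V :=
  {v | ∃ k : ℤ, i ≤ k ∧ k ≤ j ∧
    ((Even (k - i) ∧ v ∈ Ai G m c (k : ZMod m)) ∨ (Odd (k - i) ∧ v ∈ Bi G m c (k : ZMod m)))}

/-- `B[i,j] = B_i ∪ A_{i+1} ∪ B_{i+2} ∪ …` for integers `i ≤ j`. -/
def Bblk {V : Type*} (G : SimpleGraph V) (m : ℕ) (c : ZMod m → V) (i j : ℤ) : Set V :=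
  {v | ∃ k : ℤ, i ≤ k ∧ k ≤ j ∧
    ((Even (k - i) ∧ v ∈ Bi G m c (k : ZMod m)) ∨ (Odd (k - i) ∧ v ∈ Ai G m c (k : ZMod m)))}

/-- `V[i,j] = A[i,j] ∪ B[i,j]`. -/
def Vblk {V : Type*} (G : SimpleGraph V) (m : ℕ) (c : ZMod m → V) (i j : ℤ) : Set V :=
  Ablk G m c i j ∪ Bblk G m c i j

/-- The relation `<_{A_i}`. -/
def ltA {V : Type*} (G : SimpleGraph V) (m : ℕ) (c : ZMod m → V) (i : ZMod m)
    (u u' : V) : Prop :=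
  (∃ w ∈ Bi G m c (i - 2) ∪ Ai G m c (i - 1), G.Adj w u ∧ ¬ G.Adj w u') ∨
  (∃ w ∈ Ai G m c (i + 1) ∪ Bi G m c (i + 2), G.Adj w u' ∧ ¬ G.Adj w u)

/-- The relation `<_{B_i}`. -/
def ltB {V : Type*} (G : SimpleGraph V) (m : ℕ) (c : ZMod m → V) (i : ZMod m)
    (w w' : V) : Prop :=
  (∃ u ∈ Ai G m c (i - 2) ∪ Bi G m c (i - 1), G.Adj u w ∧ ¬ G.Adj u w') ∨
  (∃ u ∈ Bi G m c (i + 1) ∪ Ai G m c (i + 2), G.Adj u w' ∧ ¬ G.Adj u w)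

/-- `r` is a strict linear order on the set `S`. -/
def IsStrictLinearOrderOn {V : Type*} (S : Set V) (r : V → V → Prop) : Prop :=
  (∀ a ∈ S, ¬ r a a) ∧
    (∀ a ∈ S, ∀ b ∈ S, ∀ d ∈ S, r a b → r b d → r a d) ∧
    (∀ a ∈ S, ∀ b ∈ S, a ≠ b → r a b ∨ r b a)

/-- `L` extends `r` on the set `S`. -/
def ExtendsOn {V : Type*} (S : Set V) (r L : V → V → Prop) : Prop :=
  ∀ a ∈ S, ∀ b ∈ S, r a b → L a b

/-- `v` is the maximum of `(S, L)`. -/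
def IsMaxOf {V : Type*} (S : Set V) (L : V → V → Prop) (v : V) : Prop :=
  v ∈ S ∧ ∀ z ∈ S, z ≠ v → L z v

/-- `v` is the minimum of `(S, L)`. -/
def IsMinOf {V : Type*} (S : Set V) (L : V → V → Prop) (v : V) : Prop :=
  v ∈ S ∧ ∀ z ∈ S, z ≠ v → L v z

/-- `v, v'` belong to `S`, `L v v'`, and they are consecutive in `(S, L)`. -/
def ConsecIn {V : Type*} (S : Set V) (L : V → V → Prop) (v v' : V) : Prop :=
  v ∈ S ∧ v' ∈ S ∧ L v v' ∧ ¬ ∃ z ∈ S, L v z ∧ L z v'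

/-- The relation `≺` built from the chosen linear orders `LA i` on `A_i` and `LB i` on `B_i`. -/
def precRel {V : Type*} (G : SimpleGraph V) (m : ℕ) (c : ZMod m → V)
    (LA LB : ZMod m → V → V → Prop) (v v' : V) : Prop :=
  ∃ i : ZMod m,
    ConsecIn (Ai G m c i) (LA i) v v' ∨
    ConsecIn (Bi G m c i) (LB i) v v' ∨
    (IsMaxOf (Ai G m c i) (LA i) v ∧ IsMinOf (Bi G m c (i + 1)) (LB (i + 1)) v') ∨
    (IsMaxOf (Bi G m c i) (LB i) v ∧ IsMinOf (Ai G m c (i + 1)) (LA (i + 1)) v')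

/-- `<_{V'}`: the transitive closure of `≺` restricted to `V'`. -/
def ltOn {V : Type*} (G : SimpleGraph V) (m : ℕ) (c : ZMod m → V)
    (LA LB : ZMod m → V → V → Prop) (V' : Set V) : V → V → Prop :=
  Relation.TransGen (fun a b => a ∈ V' ∧ b ∈ V' ∧ precRel G m c LA LB a b)

/-- The relation `<_cl`. -/
def ltCl {V : Type*} (G : SimpleGraph V) (m : ℕ) (c : ZMod m → V)
    (LA LB : ZMod m → V → V → Prop) (v v' : V) : Prop :=
  ∃ i : ℕ, i < m ∧
    ((v ∈ Ablk G m c ((i : ℤ) - 2) ((i : ℤ) + 2) ∧ v' ∈ Ablk G m c ((i : ℤ) - 2) ((i : ℤ) + 2) ∧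
        ltOn G m c LA LB (Ablk G m c ((i : ℤ) - 2) ((i : ℤ) + 2)) v v') ∨
      (v ∈ Bblk G m c ((i : ℤ) - 2) ((i : ℤ) + 2) ∧ v' ∈ Bblk G m c ((i : ℤ) - 2) ((i : ℤ) + 2) ∧
        ltOn G m c LA LB (Bblk G m c ((i : ℤ) - 2) ((i : ℤ) + 2)) v v'))

/-- `r` is a transitive orientation of `G`. -/
def IsTransOrient {V : Type*} (G : SimpleGraph V) (r : V → V → Prop) : Prop :=
  (∀ v, ¬ r v v) ∧ (∀ a b d, r a b → r b d → r a d) ∧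
    ∀ u v, u ≠ v → ((r u v ∨ r v u) ↔ G.Adj u v)

/-- A permutation graph: both `G` and its complement admit transitive orientations. -/
def IsPermGraph {V : Type*} (G : SimpleGraph V) : Prop :=
  (∃ r, IsTransOrient G r) ∧ ∃ r, IsTransOrient Gᶜ r

/-- A bipartite permutation graph. -/
def IsBPG {V : Type*} (G : SimpleGraph V) : Prop :=
  G.Colorable 2 ∧ IsPermGraph G

/-- `X` is a hole cut of `G`: `G - X` is a bipartite permutation graph. -/
def IsHoleCut {V : Type*} (G : SimpleGraph V) (X : Set V) : Prop :=
  IsBPG (G.induce Xᶜ)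

/-- The adjacency property: for every `u ∈ U`, `N(u)` consists of vertices
consecutive in `(W, r)`. -/
def AdjProperty {V : Type*} (G : SimpleGraph V) (U W : Set V) (r : V → V → Prop) : Prop :=
  ∀ u ∈ U, ∀ w ∈ W, ∀ w' ∈ W, ∀ w'' ∈ W,
    r w w' → r w' w'' → G.Adj u w → G.Adj u w'' → G.Adj u w'

/-- The enclosure property: for `u, u' ∈ U` with `N(u) ⊆ N(u')`, the set `N(u') \ N(u)`
consists of vertices consecutive in `(W, r)`. -/
def EncProperty {V : Type*} (G : SimpleGraph V) (U W : Set V) (r : V → V → Prop) : Prop :=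
  ∀ u ∈ U, ∀ u' ∈ U, G.neighborSet u ∩ W ⊆ G.neighborSet u' ∩ W →
    ∀ w ∈ W, ∀ w' ∈ W, ∀ w'' ∈ W, r w w' → r w' w'' →
      (G.Adj u' w ∧ ¬ G.Adj u w) → (G.Adj u' w'' ∧ ¬ G.Adj u w'') →
        (G.Adj u' w' ∧ ¬ G.Adj u w')

/-- `(U, rU)` and `(W, rW)` form a strong ordering of `U ∪ W`. -/
def StrongOrdering {V : Type*} (G : SimpleGraph V) (U W : Set V)
    (rU rW : V → V → Prop) : Prop :=
  ∀ u ∈ U, ∀ u' ∈ U, ∀ w ∈ W, ∀ w' ∈ W,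
    G.Adj u w' → G.Adj u' w → rU u u' → rW w w' → G.Adj u w ∧ G.Adj u' w'

/-- `S` induces in `G` one of the graphs `K₃, T₂, X₂, X₃, C₅, …, C₉`. -/
def IsForbiddenSet {V : Type*} (G : SimpleGraph V) (S : Set V) : Prop :=
  Nonempty (graphK3 ≃g G.induce S) ∨ Nonempty (graphT2 ≃g G.induce S) ∨
    Nonempty (graphX2 ≃g G.induce S) ∨ Nonempty (graphX3 ≃g G.induce S) ∨
    ∃ k : ℕ, 5 ≤ k ∧ k ≤ 9 ∧ Nonempty (cycleG k ≃g G.induce S)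

/-!
An arc of length at most `m - 2` of the shortest hole `C` is an induced path, so a vertex seeing
both ends of a shorter arc but none of its interior, or an edge `w v` with `w` seeing one end and
`v` the other, would close a hole shorter than `m`. Together with triangle-freeness this confines
the neighbours of a vertex on `C`: a vertex adjacent to `c_x` lies in `B_x`, in `A_{x-1}`, or is
adjacent to `c_{x+2}`, and iterating, it lies in some `A_j` or `B_j`, since a vertex adjacent to
`c_x, c_{x+2}, c_{x+4}, c_{x+6}` induces `X₃` with the arc between them.

Let `w ∈ B_i`. A vertex `u ∈ A_i` not adjacent to `w` induces `X₂` with `c_{i-2}, …, c_{i+2}` and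
`w`. A neighbour `v` of `w` without neighbours on `C` induces `T₂` with `c_{i-2}, …, c_{i+2}`
and `w`; otherwise `v ∈ A_j` or `v ∈ B_j`, and since the path `w, c_i, …, c_j, v` cannot close a
short hole, `v ∈ B_{i±1}` or `v ∈ A_i ∪ A_{i±2}`.
-/

instance : DecidableRel graphT2.Adj := fun a b =>
  decidable_of_iff _ (SimpleGraph.fromRel_adj _ a b).symm
instance : DecidableRel graphX2.Adj := fun a b =>
  decidable_of_iff _ (SimpleGraph.fromRel_adj _ a b).symm
instance : DecidableRel graphX3.Adj := fun a b =>
  decidable_of_iff _ (SimpleGraph.fromRel_adj _ a b).symm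

namespace ZMod

theorem natCast_inj_of_lt {m a b : ℕ} (ha : a < m) (hb : b < m) :
    (a : ZMod m) = b ↔ a = b := by
  rw [ZMod.natCast_eq_natCast_iff', Nat.mod_eq_of_lt ha, Nat.mod_eq_of_lt hb]

theorem exists_eq_add_natCast {m : ℕ} [NeZero m] (x y : ZMod m) :
    ∃ a < m, y = x + a :=
  ⟨(y - x).val, ZMod.val_lt _, by rw [ZMod.natCast_zmod_val, add_sub_cancel]⟩

theorem natCast_self_sub {m k : ℕ} (hk : k ≤ m) : ((m - k : ℕ) : ZMod m) = -k := by
  rw [Nat.cast_sub hk, ZMod.natCast_self, zero_sub]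

theorem eq_add_one_iff_val {L : ℕ} (hL : 1 < L) (x y : ZMod L) :
    y = x + 1 ↔ y.val = x.val + 1 ∨ (x.val = L - 1 ∧ y.val = 0) := by
  have : NeZero L := ⟨by omega⟩
  have : Fact (1 < L) := ⟨hL⟩
  rw [← ZMod.val_injective L |>.eq_iff, ZMod.val_add, ZMod.val_one]
  have hx := x.val_lt
  have hy := y.val_lt
  rcases Nat.lt_or_ge (x.val + 1) L with h | h
  · rw [Nat.mod_eq_of_lt h]; omega
  · rw [show x.val + 1 = L by omega, Nat.mod_self]; omega

end ZMod

section

variable {V : Type*} {G : SimpleGraph V}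

def FalseTwinFree {W : Type*} (H : SimpleGraph W) : Prop :=
  ∀ a b, a ≠ b → ¬ H.Adj a b → ∃ d, ¬ (H.Adj d a ↔ H.Adj d b)

/-- Injectivity comes for free: two vertices with the same image are either adjacent or
distinguished by a third vertex. -/
theorem containsInduced_of_adj_iff {W : Type*} {H : SimpleGraph W} (hH : FalseTwinFree H)
    (f : W → V) (hf : ∀ a b, G.Adj (f a) (f b) ↔ H.Adj a b) : ContainsInduced H G := by
  refine ⟨⟨⟨f, fun a b hab => ?_⟩, hf _ _⟩⟩
  by_contra hne
  by_cases hadj : H.Adj a b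
  · exact G.irrefl (hab ▸ (hf a b).2 hadj)
  · obtain ⟨d, hd⟩ := hH a b hne hadj
    exact hd (by rw [← hf, ← hf, hab])

theorem falseTwinFree_graphK3 : FalseTwinFree graphK3 :=
  fun _ _ hne hadj => (hadj hne).elim

theorem falseTwinFree_graphT2 : FalseTwinFree graphT2 := by
  unfold FalseTwinFree; decide

theorem falseTwinFree_graphX2 : FalseTwinFree graphX2 := by
  unfold FalseTwinFree; decide

theorem falseTwinFree_graphX3 : FalseTwinFree graphX3 := by
  unfold FalseTwinFree; decide

theorem not_adj_of_cliqueFree_three (h3 : G.CliqueFree 3) {a b d : V} (hab : G.Adj a b)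
    (had : G.Adj a d) : ¬ G.Adj b d :=
  fun hbd => by classical exact h3 {a, b, d} (is3Clique_triple_iff.mpr ⟨hab, had, hbd⟩)

theorem cliqueFree_three_of_not_containsInduced (h : ¬ ContainsInduced graphK3 G) :
    G.CliqueFree 3 := by
  classical
  intro s hs
  obtain ⟨a, b, d, hab, had, hbd, rfl⟩ := is3Clique_iff.mp hs
  refine h (containsInduced_of_adj_iff falseTwinFree_graphK3 ![a, b, d] fun i j => ?_)
  fin_cases i <;> fin_cases j <;> simp [graphK3, hab, had, hbd, hab.symm, had.symm, hbd.symm]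

def IsInducedPath (G : SimpleGraph V) (n : ℕ) (P : ℕ → V) : Prop :=
  Set.InjOn P (Set.Iic n) ∧ ∀ a ≤ n, ∀ b ≤ n, (G.Adj (P a) (P b) ↔ (b = a + 1 ∨ a = b + 1))

variable {n : ℕ} {P : ℕ → V}

theorem IsInducedPath.containsInduced_T2 (hP : IsInducedPath G 4 P) {w v : V}
    (hw : ∀ a ≤ 4, (G.Adj w (P a) ↔ a = 2)) (hv : ∀ a ≤ 4, ¬ G.Adj v (P a))
    (hwv : G.Adj w v) : ContainsInduced graphT2 G := by
  have hw' : ∀ a ≤ 4, (G.Adj (P a) w ↔ a = 2) := fun a ha => G.adj_comm _ _ |>.trans (hw a ha)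
  have hv' : ∀ a ≤ 4, ¬ G.Adj (P a) v := fun a ha h => hv a ha h.symm
  refine containsInduced_of_adj_iff falseTwinFree_graphT2 ![P 2, P 1, P 3, w, P 0, P 4, v]
    fun a b => ?_
  fin_cases a <;> fin_cases b <;>
    simp [graphT2, hP.2, hw, hw', hv, hv', hwv, hwv.symm]

theorem IsInducedPath.containsInduced_X2 (hP : IsInducedPath G 4 P) {u w : V}
    (hu : ∀ a ≤ 4, (G.Adj u (P a) ↔ a = 1 ∨ a = 3)) (hw : ∀ a ≤ 4, (G.Adj w (P a) ↔ a = 2))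
    (huw : ¬ G.Adj u w) : ContainsInduced graphX2 G := by
  have hu' : ∀ a ≤ 4, (G.Adj (P a) u ↔ a = 1 ∨ a = 3) := fun a ha =>
    G.adj_comm _ _ |>.trans (hu a ha)
  have hw' : ∀ a ≤ 4, (G.Adj (P a) w ↔ a = 2) := fun a ha => G.adj_comm _ _ |>.trans (hw a ha)
  refine containsInduced_of_adj_iff falseTwinFree_graphX2 ![P 1, P 2, P 3, u, P 0, w, P 4]
    fun a b => ?_
  fin_cases a <;> fin_cases b <;>
    simp [graphX2, hP.2, hu, hu', hw, hw', huw, mt Adj.symm huw]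

theorem IsInducedPath.containsInduced_X3 (hP : IsInducedPath G 6 P) {v : V}
    (hv : ∀ a ≤ 6, (G.Adj v (P a) ↔ a = 0 ∨ a = 2 ∨ a = 4 ∨ a = 6)) :
    ContainsInduced graphX3 G := by
  have hv' : ∀ a ≤ 6, (G.Adj (P a) v ↔ a = 0 ∨ a = 2 ∨ a = 4 ∨ a = 6) := fun a ha =>
    G.adj_comm _ _ |>.trans (hv a ha)
  refine containsInduced_of_adj_iff falseTwinFree_graphX3 ![P 0, P 1, P 2, P 3, P 4, v, P 6]
    fun a b => ?_
  fin_cases a <;> fin_cases b <;> simp [graphX3, hP.2, hv, hv']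

theorem isHoleEmb_of_cyclic {L : ℕ} (hL : 5 ≤ L) {f : ℕ → V} (hinj : Set.InjOn f (Set.Iio L))
    (hadj : ∀ a < L, ∀ b < L, (G.Adj (f a) (f b) ↔
      (b = a + 1 ∨ a = b + 1 ∨ (a = L - 1 ∧ b = 0) ∨ (b = L - 1 ∧ a = 0)))) :
    IsHoleEmb G L (fun z => f z.val) := by
  have : NeZero L := ⟨by omega⟩
  refine ⟨hL, fun x y h => ZMod.val_injective L (hinj x.val_lt y.val_lt h), fun x y => ?_⟩
  rw [hadj _ x.val_lt _ y.val_lt, ZMod.eq_add_one_iff_val (by omega),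
    ZMod.eq_add_one_iff_val (by omega)]
  omega

theorem IsInducedPath.isHoleEmb_update (hP : IsInducedPath G n P) (hn : 3 ≤ n) {v : V}
    (hv : ∀ a ≤ n, (G.Adj v (P a) ↔ a = 0 ∨ a = n)) :
    IsHoleEmb G (n + 2) (fun z => Function.update P (n + 1) v z.val) := by
  have hvP : ∀ a ≤ n, v ≠ P a := by
    rintro a ha rfl
    have h0 := (hv 0 (by omega)).2 (.inl rfl)
    have hn' := (hv n le_rfl).2 (.inr rfl)
    rw [hP.2 a ha _ (by omega)] at h0
    rw [hP.2 a ha _ le_rfl] at hn'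
    omega
  apply isHoleEmb_of_cyclic (by omega)
  · intro a ha b hb hab
    simp only [Set.mem_Iio, Function.update_apply] at ha hb hab
    split_ifs at hab with h1 h2 h2
    · omega
    · exact absurd hab (hvP b (by omega))
    · exact absurd hab.symm (hvP a (by omega))
    · exact hP.1 (Set.mem_Iic.2 (by omega)) (Set.mem_Iic.2 (by omega)) hab
  · intro a ha b hb
    simp only [Function.update_apply]
    split_ifs with h1 h2 h2
    · simp only [G.irrefl, false_iff]; omega
    · rw [hv b (by omega)]; omega
    · rw [G.adj_comm, hv a (by omega)]; omega
    · rw [hP.2 a (by omega) b (by omega)]; omega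

theorem IsInducedPath.update_zero (hP : IsInducedPath G n P) (hn : 3 ≤ n) {u : V}
    (hu : ∀ a, 1 ≤ a → a ≤ n → (G.Adj u (P a) ↔ a = 1)) :
    IsInducedPath G n (Function.update P 0 u) := by
  have huP : ∀ a, 1 ≤ a → a ≤ n → u ≠ P a := by
    rintro a ha1 ha rfl
    have h1 := (hu 1 le_rfl (by omega)).2 rfl
    rw [hP.2 a ha _ (by omega)] at h1
    have h3 := (hu 3 (by omega) hn).1
    rw [hP.2 a ha _ hn] at h3
    have := (hu a ha1 ha).1
    rw [hP.2 a ha a ha] at this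
    omega
  refine ⟨fun a ha b hb hab => ?_, fun a ha b hb => ?_⟩
  · simp only [Function.update_apply] at hab
    simp only [Set.mem_Iic] at ha hb
    split_ifs at hab with h1 h2 h2
    · omega
    · exact absurd hab (huP b (by omega) hb)
    · exact absurd hab.symm (huP a (by omega) ha)
    · exact hP.1 ha hb hab
  · simp only [Function.update_apply]
    split_ifs with h1 h2 h2
    · simp only [G.irrefl, false_iff]; omega
    · rw [hu b (by omega) hb]; omega
    · rw [G.adj_comm, hu a (by omega) ha]; omega
    · exact hP.2 a ha b hb

variable {m : ℕ} {c : ZMod m → V}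

theorem mem_Bi_iff (hc : Function.Injective c) {i : ZMod m} {v : V} :
    v ∈ Bi G m c i ↔ ∀ j, (G.Adj v (c j) ↔ j = i) := by
  simp only [Bi, Set.mem_ofPred_eq, Set.ext_iff, Set.mem_inter_iff, mem_neighborSet,
    Set.mem_range, Set.mem_singleton_iff]
  refine ⟨fun h j => by simpa [hc.eq_iff] using h (c j), fun h z => ⟨?_, ?_⟩⟩
  · rintro ⟨hz, j, rfl⟩
    rw [(h j).1 hz]
  · rintro rfl
    exact ⟨(h i).2 rfl, i, rfl⟩

theorem mem_Ai_iff (hc : Function.Injective c) {i : ZMod m} {v : V} :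
    v ∈ Ai G m c i ↔ ∀ j, (G.Adj v (c j) ↔ j = i - 1 ∨ j = i + 1) := by
  simp only [Ai, Set.mem_ofPred_eq, Set.ext_iff, Set.mem_inter_iff, mem_neighborSet,
    Set.mem_range, Set.mem_insert_iff, Set.mem_singleton_iff]
  refine ⟨fun h j => by simpa [hc.eq_iff] using h (c j), fun h z => ⟨?_, ?_⟩⟩
  · rintro ⟨hz, j, rfl⟩
    rcases (h j).1 hz with rfl | rfl <;> simp
  · rintro (rfl | rfl)
    · exact ⟨(h _).2 (.inl rfl), _, rfl⟩
    · exact ⟨(h _).2 (.inr rfl), _, rfl⟩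

theorem adj_add_natCast_iff_of_mem_Bi (hc : Function.Injective c) {x : ZMod m} {a b : ℕ}
    {w : V} (hw : w ∈ Bi G m c (x + b)) (ha : a < m) (hb : b < m) :
    G.Adj w (c (x + a)) ↔ a = b := by
  rw [(mem_Bi_iff hc).1 hw, add_right_inj, ZMod.natCast_inj_of_lt ha hb]

theorem adj_add_natCast_iff_of_mem_Ai (hc : Function.Injective c) {x : ZMod m} {a b : ℕ}
    {u : V} (hu : u ∈ Ai G m c (x + b)) (ha : a < m) (hb : 1 ≤ b) (hbm : b + 1 < m) :
    G.Adj u (c (x + a)) ↔ a + 1 = b ∨ a = b + 1 := by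
  rw [(mem_Ai_iff hc).1 hu, add_sub_assoc, add_assoc, add_right_inj, add_right_inj,
    ← Nat.cast_one, ← Nat.cast_sub hb, ← Nat.cast_add, ZMod.natCast_inj_of_lt ha (by omega),
    ZMod.natCast_inj_of_lt ha hbm]
  omega

theorem ShortestHole.isInducedPath_arc (hC : ShortestHole G m c) (x : ZMod m)
    (hn : n + 2 ≤ m) : IsInducedPath G n (fun a => c (x + a)) := by
  refine ⟨fun a ha b hb hab => ?_, fun a ha b hb => ?_⟩
  · simp only [Set.mem_Iic] at ha hb
    exact (ZMod.natCast_inj_of_lt (by omega) (by omega)).1 (add_left_cancel (hC.1.2.1 hab))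
  · rw [hC.1.2.2, add_assoc, add_assoc, add_right_inj, add_right_inj, ← Nat.cast_succ,
      ← Nat.cast_succ, ZMod.natCast_inj_of_lt (by omega) (by omega),
      ZMod.natCast_inj_of_lt (by omega) (by omega)]

theorem ShortestHole.add_two_eq_of_closes_arc (hC : ShortestHole G m c) (x : ZMod m) {t : ℕ}
    (ht : 3 ≤ t) (htm : t + 2 ≤ m) {v : V}
    (hv : ∀ a ≤ t, (G.Adj v (c (x + a)) ↔ a = 0 ∨ a = t)) : t + 2 = m :=
  le_antisymm htm (hC.2 _ _ ((hC.isInducedPath_arc x htm).isHoleEmb_update ht hv))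

theorem ShortestHole.add_three_eq_of_closes_arc (hC : ShortestHole G m c) (x : ZMod m)
    {t : ℕ} (ht : 2 ≤ t) (htm : t + 3 ≤ m) {w v : V} (hwv : G.Adj w v)
    (hw : ∀ a ≤ t, (G.Adj w (c (x + a)) ↔ a = 0)) (hv : ∀ a ≤ t, (G.Adj v (c (x + a)) ↔ a = t)) :
    t + 3 = m := by
  have hshift : ∀ a : ℕ, 1 ≤ a → x - 1 + (a : ZMod m) = x + ((a - 1 : ℕ) : ZMod m) := by
    intro a ha
    rw [Nat.cast_sub ha]
    ring
  -- the path `w, c x, …, c (x + t)`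
  have hpath := (hC.isInducedPath_arc (x - 1) (n := t + 1) (by omega)).update_zero (u := w)
    (by omega) fun a ha1 ha => by
      rw [hshift a ha1, hw (a - 1) (by omega)]
      omega
  refine le_antisymm htm (hC.2 _ _ (hpath.isHoleEmb_update (v := v) (by omega) fun a ha => ?_))
  rcases Nat.eq_zero_or_pos a with rfl | ha0
  · simpa using hwv.symm
  · rw [Function.update_of_ne (by omega), hshift a ha0, hv (a - 1) (by omega)]
    omega

theorem ShortestHole.not_adj_add_one (hC : ShortestHole G m c) (h3 : G.CliqueFree 3)
    {v : V} {y : ZMod m} (h : G.Adj v (c y)) : ¬ G.Adj v (c (y + 1)) :=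
  not_adj_of_cliqueFree_three h3 h.symm ((hC.1.2.2 y (y + 1)).2 (.inl rfl))

theorem ShortestHole.exists_next_neighbour (hC : ShortestHole G m c) (h3 : G.CliqueFree 3)
    {v : V} {x y : ZMod m} (hvx : G.Adj v (c x)) (hvy : G.Adj v (c y)) (hyx : y ≠ x) :
    ∃ t : ℕ, (t = 2 ∨ t = m - 2) ∧ G.Adj v (c (x + t)) ∧
      ∀ a : ℕ, 0 < a → a < t → ¬ G.Adj v (c (x + a)) := by
  classical
  have hm := hC.1.1
  have : NeZero m := ⟨by omega⟩
  obtain ⟨b, hbm, rfl⟩ := ZMod.exists_eq_add_natCast x y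
  have hb0 : 0 < b := Nat.pos_of_ne_zero (by rintro rfl; simp at hyx)
  have hex : ∃ t : ℕ, 0 < t ∧ G.Adj v (c (x + t)) := ⟨b, hb0, hvy⟩
  obtain ⟨ht0, hvt⟩ := Nat.find_spec hex
  have hmin : ∀ a, 0 < a → a < Nat.find hex → ¬ G.Adj v (c (x + a)) :=
    fun a ha0 ha h => Nat.find_min hex ha ⟨ha0, h⟩
  have htm : Nat.find hex < m := (Nat.find_min' hex ⟨hb0, hvy⟩).trans_lt hbm
  refine ⟨Nat.find hex, ?_, hvt, hmin⟩
  set t := Nat.find hex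
  have ht1 : t ≠ 1 := by
    rintro h
    rw [h, Nat.cast_one] at hvt
    exact hC.not_adj_add_one h3 hvx hvt
  have htm1 : t ≠ m - 1 := by
    intro h
    apply hC.not_adj_add_one h3 hvt
    rwa [add_assoc, ← Nat.cast_succ, h, Nat.succ_eq_add_one, Nat.sub_add_cancel (by omega),
      ZMod.natCast_self, add_zero]
  by_contra! hne
  have := hC.add_two_eq_of_closes_arc x (t := t) (by omega) (by omega) (v := v) fun a ha => by
    rcases Nat.eq_zero_or_pos a with rfl | ha0
    · simpa using hvx
    rcases ha.lt_or_eq with hlt | rfl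
    · exact iff_of_false (hmin a ha0 hlt) (by omega)
    · exact iff_of_true hvt (.inr rfl)
  omega

theorem ShortestHole.mem_Bi_or_mem_Ai_sub_one_or_adj_add_two (hC : ShortestHole G m c)
    (h3 : G.CliqueFree 3) {v : V} {x : ZMod m} (hvx : G.Adj v (c x)) :
    v ∈ Bi G m c x ∨ v ∈ Ai G m c (x - 1) ∨ G.Adj v (c (x + 2)) := by
  by_cases hB : ∀ y, G.Adj v (c y) → y = x
  · exact .inl ((mem_Bi_iff hC.1.2.1).2 fun y => ⟨hB y, fun h => h ▸ hvx⟩)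
  push Not at hB
  obtain ⟨y, hvy, hyx⟩ := hB
  obtain ⟨t, rfl | rfl, hvt, hgap⟩ := hC.exists_next_neighbour h3 hvx hvy hyx
  · exact .inr (.inr (by simpa using hvt))
  refine .inr (.inl ((mem_Ai_iff hC.1.2.1).2 fun j => ?_))
  have hm := hC.1.1
  have : NeZero m := ⟨by omega⟩
  obtain ⟨a, ham, rfl⟩ := ZMod.exists_eq_add_natCast x j
  have hsub : x - 1 - 1 = x + ((m - 2 : ℕ) : ZMod m) := by
    rw [ZMod.natCast_self_sub (by omega)]
    ring
  rw [sub_add_cancel, hsub, add_right_inj, ZMod.natCast_inj_of_lt ham (by omega),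
    ← add_zero x, add_assoc, add_right_inj, zero_add, ← Nat.cast_zero,
    ZMod.natCast_inj_of_lt ham (by omega)]
  rcases Nat.eq_zero_or_pos a with rfl | ha0
  · simpa using hvx
  rcases lt_trichotomy a (m - 2) with hlt | rfl | hgt
  · exact iff_of_false (hgap a ha0 hlt) (by omega)
  · exact iff_of_true hvt (.inl rfl)
  · refine iff_of_false (fun h => hC.not_adj_add_one h3 hvt ?_) (by omega)
    rwa [add_assoc, ← Nat.cast_succ, show (m - 2).succ = a by omega]

theorem ShortestHole.containsInduced_X3_of_adj (hC : ShortestHole G m c) (hm : 8 ≤ m)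
    (h3 : G.CliqueFree 3) {v : V} {x : ZMod m} (h0 : G.Adj v (c x)) (h2 : G.Adj v (c (x + 2)))
    (h4 : G.Adj v (c (x + 4))) (h6 : G.Adj v (c (x + 6))) : ContainsInduced graphX3 G := by
  have hsucc : ∀ k : ℕ, G.Adj v (c (x + k)) → ¬ G.Adj v (c (x + (k + 1 : ℕ))) :=
    fun k h => by rw [Nat.cast_succ, ← add_assoc]; exact hC.not_adj_add_one h3 h
  have h1 : ¬ G.Adj v (c (x + 1)) := hC.not_adj_add_one h3 h0
  have h3' : ¬ G.Adj v (c (x + 3)) := by simpa using hsucc 2 (by simpa using h2)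
  have h5 : ¬ G.Adj v (c (x + 5)) := by simpa using hsucc 4 (by simpa using h4)
  refine (hC.isInducedPath_arc x (n := 6) (by omega)).containsInduced_X3 (v := v) fun a ha => ?_
  interval_cases a <;> simp [h0, h1, h2, h3', h4, h5, h6]

theorem ShortestHole.exists_mem_Ai_or_mem_Bi (hC : ShortestHole G m c) (hm : 8 ≤ m)
    (h3 : G.CliqueFree 3) (hX3 : ¬ ContainsInduced graphX3 G) {v : V} {x : ZMod m}
    (hvx : G.Adj v (c x)) : ∃ j, v ∈ Ai G m c j ∨ v ∈ Bi G m c j := by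
  have hc := hC.1.2.1
  have hne : ∀ k : ℕ, 0 < k → k < m → (k : ZMod m) ≠ 0 := fun k hk hkm h => by
    rw [← Nat.cast_zero, ZMod.natCast_inj_of_lt hkm (by omega)] at h
    omega
  rcases hC.mem_Bi_or_mem_Ai_sub_one_or_adj_add_two h3 hvx with h | h | h2
  · exact ⟨x, .inr h⟩
  · exact ⟨x - 1, .inl h⟩
  rcases hC.mem_Bi_or_mem_Ai_sub_one_or_adj_add_two h3 h2 with h | h | h4
  · have := (mem_Bi_iff hc).1 h x |>.1 hvx
    exact (hne 2 (by omega) (by omega) (by push_cast; linear_combination -this)).elim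
  · exact ⟨x + 2 - 1, .inl h⟩
  rw [add_assoc, two_add_two_eq_four] at h4
  rcases hC.mem_Bi_or_mem_Ai_sub_one_or_adj_add_two h3 h4 with h | h | h6
  · have := (mem_Bi_iff hc).1 h x |>.1 hvx
    exact (hne 4 (by omega) (by omega) (by push_cast; linear_combination -this)).elim
  · rcases (mem_Ai_iff hc).1 h x |>.1 hvx with h' | h'
    · exact (hne 2 (by omega) (by omega) (by push_cast; linear_combination -h')).elim
    · exact (hne 4 (by omega) (by omega) (by push_cast; linear_combination -h')).elim
  rw [add_assoc, show (4 + 2 : ZMod m) = 6 by norm_num] at h6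
  exact absurd (hC.containsInduced_X3_of_adj hm h3 hvx h2 h4 h6) hX3

theorem ShortestHole.eq_add_one_or_eq_sub_one_of_adj (hC : ShortestHole G m c) (hm : 7 ≤ m)
    (h3 : G.CliqueFree 3) {i j : ZMod m} {w v : V} (hw : w ∈ Bi G m c i)
    (hv : v ∈ Bi G m c j) (hwv : G.Adj w v) : j = i + 1 ∨ j = i - 1 := by
  have hc := hC.1.2.1
  have : NeZero m := ⟨by omega⟩
  obtain ⟨t, htm, rfl⟩ := ZMod.exists_eq_add_natCast i j
  have hw0 : w ∈ Bi G m c (i + ((0 : ℕ) : ZMod m)) := by simpa using hw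
  have hv0 : v ∈ Bi G m c (i + t + ((0 : ℕ) : ZMod m)) := by simpa using hv
  have hw' : w ∈ Bi G m c (i + t + ((m - t : ℕ) : ZMod m)) := by
    rwa [ZMod.natCast_self_sub htm.le, add_neg_cancel_right]
  -- the detour `w, c i, …, c j, v` closes a hole on either side of `c`
  have hfwd : 2 ≤ t → t + 3 ≤ m → t + 3 = m := fun h1 h2 =>
    hC.add_three_eq_of_closes_arc i h1 h2 hwv
      (fun a _ => adj_add_natCast_iff_of_mem_Bi hc hw0 (by omega) (by omega))
      (fun a _ => adj_add_natCast_iff_of_mem_Bi hc hv (by omega) htm)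
  have hbwd : 2 ≤ m - t → m - t + 3 ≤ m → m - t + 3 = m := fun h1 h2 =>
    hC.add_three_eq_of_closes_arc (i + t) h1 h2 hwv.symm
      (fun a _ => adj_add_natCast_iff_of_mem_Bi hc hv0 (by omega) (by omega))
      (fun a _ => adj_add_natCast_iff_of_mem_Bi hc hw' (by omega) (by omega))
  have ht0 : t ≠ 0 := by
    rintro rfl
    exact not_adj_of_cliqueFree_three h3 hwv ((mem_Bi_iff hc).1 hw i |>.2 rfl)
      ((mem_Bi_iff hc).1 hv i |>.2 (by simp))
  rcases (show t = 1 ∨ t = m - 1 by omega) with rfl | rfl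
  · exact .inl (by simp)
  · exact .inr (by rw [ZMod.natCast_self_sub (by omega)]; ring)

theorem ShortestHole.eq_or_eq_add_two_or_eq_sub_two_of_adj (hC : ShortestHole G m c)
    (h3 : G.CliqueFree 3) {i j : ZMod m} {w v : V} (hw : w ∈ Bi G m c i)
    (hv : v ∈ Ai G m c j) (hwv : G.Adj w v) : j = i ∨ j = i + 2 ∨ j = i - 2 := by
  have hc := hC.1.2.1
  have hm := hC.1.1
  have : NeZero m := ⟨by omega⟩
  have hvi : ¬ G.Adj v (c i) :=
    not_adj_of_cliqueFree_three h3 hwv ((mem_Bi_iff hc).1 hw i |>.2 rfl)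
  obtain ⟨t, htm, rfl⟩ := ZMod.exists_eq_add_natCast i j
  have hw0 : w ∈ Bi G m c (i + ((0 : ℕ) : ZMod m)) := by simpa using hw
  have ht1 : t ≠ 1 := by
    rintro rfl
    exact hvi ((mem_Ai_iff hc).1 hv i |>.2 (.inl (by simp)))
  have htm1 : t ≠ m - 1 := by
    rintro rfl
    exact hvi ((mem_Ai_iff hc).1 hv i |>.2 (.inr (by rw [ZMod.natCast_self_sub (by omega)]; ring)))
  have hmid : 3 ≤ t → t ≤ m - 2 → t + 2 = m := fun h1 h2 => by
    have := hC.add_three_eq_of_closes_arc i (t := t - 1) (by omega) (by omega) hwv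
      (fun a _ => adj_add_natCast_iff_of_mem_Bi hc hw0 (by omega) (by omega))
      fun a _ => by
        rw [adj_add_natCast_iff_of_mem_Ai hc hv (by omega) (by omega) (by omega)]
        omega
    omega
  rcases (show t = 0 ∨ t = 2 ∨ t = m - 2 by omega) with rfl | rfl | rfl
  · exact .inl (by simp)
  · exact .inr (.inl (by simp))
  · exact .inr (.inr (by rw [ZMod.natCast_self_sub (by omega)]; ring))

theorem ShortestHole.Ai_subset_neighborSet (hC : ShortestHole G m c) (hm : 6 ≤ m)
    (hX2 : ¬ ContainsInduced graphX2 G) {i : ZMod m} {w : V} (hw : w ∈ Bi G m c i) :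
    Ai G m c i ⊆ G.neighborSet w := by
  intro u hu
  by_contra huw
  have hc := hC.1.2.1
  have hi : i = i - 2 + ((2 : ℕ) : ZMod m) := by simp
  rw [hi] at hw hu
  exact hX2 ((hC.isInducedPath_arc (i - 2) (n := 4) (by omega)).containsInduced_X2
    (fun a _ => by rw [adj_add_natCast_iff_of_mem_Ai hc hu (by omega) (by omega) (by omega)]; omega)
    (fun a _ => adj_add_natCast_iff_of_mem_Bi hc hw (by omega) (by omega))
    (fun h => huw h.symm))

theorem ShortestHole.neighborSet_subset_Ablk (hC : ShortestHole G m c) (hm : 8 ≤ m)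
    (h3 : G.CliqueFree 3) (hT2 : ¬ ContainsInduced graphT2 G)
    (hX3 : ¬ ContainsInduced graphX3 G) {i : ℤ} {w : V} (hw : w ∈ Bi G m c i) :
    G.neighborSet w ⊆ Ablk G m c (i - 2) (i + 2) := by
  have hc := hC.1.2.1
  intro v hwv
  rw [mem_neighborSet] at hwv
  obtain ⟨x, hvx⟩ : ∃ x, G.Adj v (c x) := by
    by_contra! hv
    have hw2 : w ∈ Bi G m c ((i : ZMod m) - 2 + ((2 : ℕ) : ZMod m)) := by simpa using hw
    exact hT2 ((hC.isInducedPath_arc _ (n := 4) (by omega)).containsInduced_T2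
      (fun a _ => adj_add_natCast_iff_of_mem_Bi hc hw2 (by omega) (by omega))
      (fun a _ => hv _) hwv)
  obtain ⟨j, hj | hj⟩ := hC.exists_mem_Ai_or_mem_Bi hm h3 hX3 hvx
  · rcases hC.eq_or_eq_add_two_or_eq_sub_two_of_adj h3 hw hj hwv with rfl | rfl | rfl
    · exact ⟨i, by omega, by omega, .inl ⟨⟨1, by ring⟩, hj⟩⟩
    · exact ⟨i + 2, by omega, by omega, .inl ⟨⟨2, by ring⟩, by push_cast; exact hj⟩⟩
    · exact ⟨i - 2, by omega, by omega, .inl ⟨⟨0, by ring⟩, by push_cast; exact hj⟩⟩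
  · rcases hC.eq_add_one_or_eq_sub_one_of_adj (by omega) h3 hw hj hwv with rfl | rfl
    · exact ⟨i + 1, by omega, by omega, .inr ⟨⟨1, by ring⟩, by push_cast; exact hj⟩⟩
    · exact ⟨i - 1, by omega, by omega, .inr ⟨⟨0, by ring⟩, by push_cast; exact hj⟩⟩

end

theorem Bi_neighborhood_containment_general {V : Type*} (G : SimpleGraph V) (hG : AlmostBPG G)
    (m : ℕ) (c : ZMod m → V) (hm : 10 ≤ m) (hC : ShortestHole G m c) :
    ∀ i : ℕ, i < m → ∀ w ∈ Bi G m c (i : ZMod m),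
      Ai G m c (i : ZMod m) ⊆ G.neighborSet w ∧
        G.neighborSet w ⊆ Ablk G m c ((i : ℤ) - 2) ((i : ℤ) + 2) := by
  obtain ⟨hK3, hT2, hX2, hX3, -⟩ := hG
  intro i _ w hw
  refine ⟨hC.Ai_subset_neighborSet (by omega) hX2 hw,
    hC.neighborSet_subset_Ablk (by omega) (cliqueFree_three_of_not_containsInduced hK3) hT2 hX3 ?_⟩
  simpa using hw

theorem Bi_neighborhood_containment {V : Type*} (G : SimpleGraph V) (hconn : G.Connected) (hG : AlmostBPG G)
    (m : ℕ) (c : ZMod m → V) (hm : 10 ≤ m) (hC : ShortestHole G m c) :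
    ∀ i : ℕ, i < m → ∀ w ∈ Bi G m c (i : ZMod m),
      Ai G m c (i : ZMod m) ⊆ G.neighborSet w ∧
        G.neighborSet w ⊆ Ablk G m c ((i : ℤ) - 2) ((i : ℤ) + 2) :=
  Bi_neighborhood_containment_general G hG m c hm hC
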